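/- Let p, q ∈ [0,1] and let X ~ Binomial(n, p), Y ~ Binomial(n, q) be independent. Define P₁ = P[X > Y], P₂ = P[Y > X], S_ETCP = ½(p + q) + ½(P₁ − P₂)(p − q), and S_URMS = ½(p + q). Then S_ETCP ≥ S_URMS, i.e. (P₁ − P₂)(p − q) ≥ 0. -/
import Mathlib


open Finset

/-- Binomial probability mass function: `P[Bin(n,p) = k]`. -/
noncomputable def binomPMF (n : ℕ) (p : ℝ) (k : ℕ) : ℝ :=
  (n.choose k : ℝ) * p ^ k * (1 - p) ^ (n - k)

/-- MLR termwise inequality. -/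
lemma binomPMF_mul_le (n i j : ℕ) (hij : j < i) (hin : i ≤ n) (p q : ℝ)
    (hp0 : 0 ≤ p) (hp1 : p ≤ 1) (hq0 : 0 ≤ q) (hq1 : q ≤ 1) (hpq : q ≤ p) :
    binomPMF n p j * binomPMF n q i ≤ binomPMF n p i * binomPMF n q j := by
  unfold binomPMF
  set k := i - j with hk
  have hi : i = j + k := by omega
  have hnj : n - j = (n - i) + k := by omega
  have h1 : p ^ i = p ^ j * p ^ k := by rw [hi, pow_add]
  have h2 : (1 - p) ^ (n - j) = (1 - p) ^ (n - i) * (1 - p) ^ k := by rw [hnj, pow_add]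
  have h3 : q ^ i = q ^ j * q ^ k := by rw [hi, pow_add]
  have h4 : (1 - q) ^ (n - j) = (1 - q) ^ (n - i) * (1 - q) ^ k := by rw [hnj, pow_add]
  have hkey : (q * (1 - p)) ^ k ≤ (p * (1 - q)) ^ k := by
    apply pow_le_pow_left₀ (by nlinarith) (by nlinarith)
  set A : ℝ := (n.choose i : ℝ) * (n.choose j : ℝ) *
      (p ^ j * q ^ j * (1 - p) ^ (n - i) * (1 - q) ^ (n - i)) with hA
  have hAnn : 0 ≤ A := by
    apply mul_nonneg (mul_nonneg (by positivity) (by positivity))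
    have : (0:ℝ) ≤ 1 - p := by linarith
    have : (0:ℝ) ≤ 1 - q := by linarith
    positivity
  calc (n.choose j : ℝ) * p ^ j * (1 - p) ^ (n - j) *
        ((n.choose i : ℝ) * q ^ i * (1 - q) ^ (n - i))
      = A * (q * (1 - p)) ^ k := by rw [h2, h3, mul_pow]; ring
    _ ≤ A * (p * (1 - q)) ^ k := mul_le_mul_of_nonneg_left hkey hAnn
    _ = (n.choose i : ℝ) * p ^ i * (1 - p) ^ (n - i) *
        ((n.choose j : ℝ) * q ^ j * (1 - q) ^ (n - j)) := by
        rw [h1, h4, mul_pow]; ring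

lemma P2_le_P1 (n : ℕ) (p q : ℝ)
    (hp0 : 0 ≤ p) (hp1 : p ≤ 1) (hq0 : 0 ≤ q) (hq1 : q ≤ 1) (hpq : q ≤ p) :
    (∑ i ∈ Finset.range (n+1), ∑ j ∈ Finset.range (n+1),
      if i < j then binomPMF n p i * binomPMF n q j else 0) ≤
    ∑ i ∈ Finset.range (n+1), ∑ j ∈ Finset.range (n+1),
      if j < i then binomPMF n p i * binomPMF n q j else 0 := by
  rw [Finset.sum_comm]
  apply Finset.sum_le_sum
  intro i hi
  apply Finset.sum_le_sum
  intro j hj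
  by_cases h : j < i
  · simp only [h, if_true]
    exact binomPMF_mul_le n i j h (by simpa using Nat.lt_succ_iff.mp (Finset.mem_range.mp hi))
      p q hp0 hp1 hq0 hq1 hpq
  · simp [h]

/-- ETCP is at least as good as uniformly random mode selection:
with `X ~ Bin(n,p)` and `Y ~ Bin(n,q)` independent, `P₁ = P[X > Y]`, `P₂ = P[Y > X]`,
`½(p+q) + ½(P₁ − P₂)(p − q) ≥ ½(p+q)`, i.e. `(P₁ − P₂)(p − q) ≥ 0`. -/
theorem etcp_ge_urms (n : ℕ) (hn : 0 < n) (p q : ℝ)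
    (hp : p ∈ Set.Icc (0:ℝ) 1) (hq : q ∈ Set.Icc (0:ℝ) 1) :
    let P₁ : ℝ := ∑ i ∈ Finset.range (n+1), ∑ j ∈ Finset.range (n+1),
      if j < i then binomPMF n p i * binomPMF n q j else 0
    let P₂ : ℝ := ∑ i ∈ Finset.range (n+1), ∑ j ∈ Finset.range (n+1),
      if i < j then binomPMF n p i * binomPMF n q j else 0
    (P₁ - P₂) * (p - q) ≥ 0 ∧
      (1/2)*(p+q) + (1/2)*(P₁ - P₂)*(p - q) ≥ (1/2)*(p+q) := by
  obtain ⟨hp0, hp1⟩ := hp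
  obtain ⟨hq0, hq1⟩ := hq
  intro P₁ P₂
  have hmain : (P₁ - P₂) * (p - q) ≥ 0 := by
    rcases le_total q p with hpq | hpq
    · have := P2_le_P1 n p q hp0 hp1 hq0 hq1 hpq
      have h1 : P₂ ≤ P₁ := this
      have h2 : 0 ≤ p - q := by linarith
      exact mul_nonneg (by linarith) h2
    · -- q ≥ p : apply P2_le_P1 with roles swapped
      have := P2_le_P1 n q p hq0 hq1 hp0 hp1 hpq
      have hP1 : P₁ = ∑ i ∈ Finset.range (n+1), ∑ j ∈ Finset.range (n+1),
          if i < j then binomPMF n q i * binomPMF n p j else 0 := by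
        rw [Finset.sum_comm]
        apply Finset.sum_congr rfl; intro i _
        apply Finset.sum_congr rfl; intro j _
        by_cases h : j < i <;> simp [h, mul_comm]
      have hP2 : P₂ = ∑ i ∈ Finset.range (n+1), ∑ j ∈ Finset.range (n+1),
          if j < i then binomPMF n q i * binomPMF n p j else 0 := by
        rw [Finset.sum_comm]
        apply Finset.sum_congr rfl; intro i _
        apply Finset.sum_congr rfl; intro j _
        by_cases h : i < j <;> simp [h, mul_comm]
      have h1 : P₁ ≤ P₂ := by rw [hP1, hP2]; exact this
      nlinarith [h1, hpq]
  exact ⟨hmain, by nlinarith⟩
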